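/- Let φ : [0,1]^m → [0,1]^m be Lipschitz continuous with constant L_φ and f : [0,1]^m → ℝ continuous. Then for degrees n_1,...,n_m ≥ 1, sup_{x∈[0,1]^m} |B_𝐧(f∘φ; x) − f(φ(x))| ≤ (3/2) Ω_f(L_φ √(∑_{l=1}^m 1/n_l)). -/

import Mathlib

noncomputable def bern (n k : ℕ) (x : ℝ) : ℝ :=
  (n.choose k : ℝ) * x ^ k * (1 - x) ^ (n - k)

noncomputable def bernOpM (m : ℕ) (n : Fin m → ℕ) (f : (Fin m → ℝ) → ℝ) (x : Fin m → ℝ) : ℝ :=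
  ∑ k : (∀ l : Fin m, Fin (n l + 1)),
    f (fun l => (k l : ℝ) / (n l : ℝ)) * ∏ l : Fin m, bern (n l) (k l) (x l)

noncomputable def eudist {m : ℕ} (x y : Fin m → ℝ) : ℝ :=
  Real.sqrt (∑ l : Fin m, (x l - y l) ^ 2)

noncomputable def modContM (m : ℕ) (f : (Fin m → ℝ) → ℝ) (δ : ℝ) : ℝ :=
  sSup {r : ℝ | ∃ x ∈ Set.Icc (0 : Fin m → ℝ) 1, ∃ y ∈ Set.Icc (0 : Fin m → ℝ) 1,
    eudist x y ≤ δ ∧ r = |f x - f y|}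

/-
The Bernstein weights of `x` form a probability distribution on the nodes `k/n`, so the error
at `x` is at most the average of `|f(φ(k/n)) - f(φ(x))|`. Cutting a segment into `⌊c⌋ + 1`
pieces gives `|f u - f v| ≤ (1 + c) Ω_f(δ)` whenever `‖u - v‖ ≤ c δ`; with `δ = L_φ σ`,
`σ = √(∑ 1/n_l)`, the error is at most `Ω_f(L_φ σ) (1 + E‖k/n - x‖ / σ)`. By Cauchy–Schwarz and
the variance of the one-dimensional Bernstein weights,
`(E‖k/n - x‖)² ≤ ∑ x_l (1 - x_l) / n_l ≤ σ² / 4`, which yields the constant `3/2`.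
-/

open Finset

theorem sum_mul_le_sqrt_sum_sq_mul {ι : Type*} (s : Finset ι) {w a : ι → ℝ}
    (hw : ∀ i ∈ s, 0 ≤ w i) (hw₁ : ∑ i ∈ s, w i = 1) :
    ∑ i ∈ s, a i * w i ≤ √(∑ i ∈ s, a i ^ 2 * w i) := by
  refine Real.le_sqrt_of_sq_le ?_
  have hcs := sum_sq_le_sum_mul_sum_of_sq_le_mul s (r := fun i => a i * w i)
    (fun i hi => mul_nonneg (sq_nonneg (a i)) (hw i hi)) hw fun i _ => le_of_eq (by ring)
  rwa [hw₁, mul_one] at hcs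

theorem sum_apply_mul_prod_eq {ι R : Type*} [Fintype ι] [DecidableEq ι] [CommSemiring R]
    {κ : ι → Type*} [∀ i, Fintype (κ i)] (w g : ∀ i, κ i → R) (hw : ∀ i, ∑ j, w i j = 1)
    (i₀ : ι) :
    ∑ k : ∀ i, κ i, g i₀ (k i₀) * ∏ i, w i (k i) = ∑ j, g i₀ j * w i₀ j := by
  have hsplit (k : ∀ i, κ i) : g i₀ (k i₀) * ∏ i, w i (k i) =
      ∏ i, (if i = i₀ then g i (k i) else 1) * w i (k i) := by
    rw [prod_mul_distrib, prod_ite_eq' univ i₀ (fun i => g i (k i)), if_pos (mem_univ i₀)]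
  rw [sum_congr rfl fun k _ => hsplit k,
    ← Fintype.prod_sum fun i j => (if i = i₀ then g i j else 1) * w i j,
    prod_eq_single i₀ (fun i _ hi => by simp only [if_neg hi, one_mul, hw i]) (by simp)]
  simp

theorem sum_sum_apply_mul_prod_eq {ι R : Type*} [Fintype ι] [DecidableEq ι] [CommSemiring R]
    {κ : ι → Type*} [∀ i, Fintype (κ i)] (w g : ∀ i, κ i → R) (hw : ∀ i, ∑ j, w i j = 1) :
    ∑ k : ∀ i, κ i, (∑ i, g i (k i)) * ∏ i, w i (k i) = ∑ i, ∑ j, g i j * w i j := by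
  simp_rw [sum_mul]
  rw [sum_comm]
  exact sum_congr rfl fun i₀ _ => sum_apply_mul_prod_eq w g hw i₀

theorem bern_nonneg {n k : ℕ} {x : ℝ} (hx : x ∈ Set.Icc (0 : ℝ) 1) : 0 ≤ bern n k x := by
  have h₀ := hx.1
  have h₁ : 0 ≤ 1 - x := sub_nonneg.2 hx.2
  unfold bern
  positivity

theorem sum_bern (n : ℕ) (x : ℝ) : ∑ k : Fin (n + 1), bern n k x = 1 := by
  rw [Fin.sum_univ_eq_sum_range (fun k => bern n k x)]
  have h := add_pow x (1 - x) n
  rw [add_sub_cancel, one_pow] at h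
  rw [h]
  exact sum_congr rfl fun k _ => by rw [bern]; ring

theorem sum_sq_mul_bern {n : ℕ} (hn : n ≠ 0) {x : ℝ} (hx : x ∈ Set.Icc (0 : ℝ) 1) :
    ∑ k : Fin (n + 1), ((k : ℝ) / n - x) ^ 2 * bern n k x = x * (1 - x) / n := by
  rw [← bernstein.variance hn ⟨x, hx⟩]
  refine sum_congr rfl fun k _ => ?_
  rw [bernstein_apply, bernstein.z, bern, ← neg_sub, neg_sq]

section BernsteinWeights

variable {m : ℕ} (n : Fin m → ℕ)

noncomputable def bernNode (k : ∀ l, Fin (n l + 1)) : Fin m → ℝ :=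
  fun l => (k l : ℝ) / n l

noncomputable def bernWeight (k : ∀ l, Fin (n l + 1)) (x : Fin m → ℝ) : ℝ :=
  ∏ l, bern (n l) (k l) (x l)

theorem bernOpM_eq_sum (g : (Fin m → ℝ) → ℝ) (x : Fin m → ℝ) :
    bernOpM m n g x = ∑ k, g (bernNode n k) * bernWeight n k x :=
  rfl

theorem bernNode_mem_Icc (k : ∀ l, Fin (n l + 1)) : bernNode n k ∈ Set.Icc 0 1 :=
  ⟨fun l => by unfold bernNode; positivity,
    fun l => div_le_one_of_le₀ (Nat.cast_le.2 (Fin.is_le (k l))) (Nat.cast_nonneg _)⟩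

variable {n}

theorem bernWeight_nonneg (k : ∀ l, Fin (n l + 1)) {x : Fin m → ℝ} (hx : x ∈ Set.Icc 0 1) :
    0 ≤ bernWeight n k x :=
  prod_nonneg fun l _ => bern_nonneg ⟨hx.1 l, hx.2 l⟩

theorem sum_bernWeight (x : Fin m → ℝ) : ∑ k, bernWeight n k x = 1 := by
  unfold bernWeight
  rw [← Fintype.prod_sum fun l (j : Fin (n l + 1)) => bern (n l) j (x l)]
  exact prod_eq_one fun l _ => sum_bern (n l) (x l)

theorem sum_eudist_sq_mul_bernWeight (hn : ∀ l, n l ≠ 0) {x : Fin m → ℝ}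
    (hx : x ∈ Set.Icc 0 1) :
    ∑ k, eudist (bernNode n k) x ^ 2 * bernWeight n k x = ∑ l, x l * (1 - x l) / n l := by
  have hsq (k : ∀ l, Fin (n l + 1)) :
      eudist (bernNode n k) x ^ 2 = ∑ l, ((k l : ℝ) / n l - x l) ^ 2 :=
    Real.sq_sqrt (sum_nonneg fun _ _ => sq_nonneg _)
  simp_rw [hsq, bernWeight]
  rw [sum_sum_apply_mul_prod_eq (fun l (j : Fin (n l + 1)) => bern (n l) j (x l))
    (fun l j => ((j : ℝ) / n l - x l) ^ 2) fun l => sum_bern (n l) (x l)]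
  exact sum_congr rfl fun l _ => sum_sq_mul_bern (hn l) ⟨hx.1 l, hx.2 l⟩

theorem sum_eudist_mul_bernWeight_le (hn : ∀ l, n l ≠ 0) {x : Fin m → ℝ}
    (hx : x ∈ Set.Icc 0 1) :
    ∑ k, eudist (bernNode n k) x * bernWeight n k x ≤ √(∑ l, 1 / (n l : ℝ)) / 2 := by
  have hvar : ∑ l, x l * (1 - x l) / n l ≤ (∑ l, 1 / (n l : ℝ)) / 4 := by
    rw [sum_div]
    refine sum_le_sum fun l _ => ?_
    calc x l * (1 - x l) / n l ≤ (1 / 4) / n l := by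
          gcongr
          nlinarith [sq_nonneg (x l - 1 / 2)]
      _ = 1 / n l / 4 := by ring
  calc ∑ k, eudist (bernNode n k) x * bernWeight n k x
      ≤ √(∑ k, eudist (bernNode n k) x ^ 2 * bernWeight n k x) :=
        sum_mul_le_sqrt_sum_sq_mul _ (fun k _ => bernWeight_nonneg k hx) (sum_bernWeight x)
    _ ≤ √((∑ l, 1 / (n l : ℝ)) / 4) := by
        rw [sum_eudist_sq_mul_bernWeight hn hx]
        exact Real.sqrt_le_sqrt hvar
    _ = √(∑ l, 1 / (n l : ℝ)) / 2 := by
        rw [Real.sqrt_div' _ (by norm_num : (0 : ℝ) ≤ 4), show (4 : ℝ) = 2 ^ 2 by norm_num,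
          Real.sqrt_sq zero_le_two]

theorem abs_bernOpM_sub_le (g : (Fin m → ℝ) → ℝ) {x : Fin m → ℝ} (hx : x ∈ Set.Icc 0 1) :
    |bernOpM m n g x - g x| ≤ ∑ k, |g (bernNode n k) - g x| * bernWeight n k x := by
  have hsub : bernOpM m n g x - g x = ∑ k, (g (bernNode n k) - g x) * bernWeight n k x := by
    simp_rw [sub_mul, sum_sub_distrib, ← mul_sum, sum_bernWeight, mul_one, bernOpM_eq_sum]
  rw [hsub]
  refine (abs_sum_le_sum_abs _ _).trans_eq (sum_congr rfl fun k _ => ?_)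
  rw [abs_mul, abs_of_nonneg (bernWeight_nonneg k hx)]

end BernsteinWeights

section ModulusOfContinuity

variable {m : ℕ} {f : (Fin m → ℝ) → ℝ}

theorem modContM_nonneg (f : (Fin m → ℝ) → ℝ) (δ : ℝ) : 0 ≤ modContM m f δ :=
  Real.sSup_nonneg <| by
    rintro _ ⟨_, _, _, _, _, rfl⟩
    exact abs_nonneg _

theorem abs_sub_le_modContM (hf : ContinuousOn f (Set.Icc 0 1)) {x y : Fin m → ℝ} {δ : ℝ}
    (hx : x ∈ Set.Icc 0 1) (hy : y ∈ Set.Icc 0 1) (hxy : eudist x y ≤ δ) :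
    |f x - f y| ≤ modContM m f δ := by
  obtain ⟨C, hC⟩ := isCompact_Icc.exists_bound_of_continuousOn hf
  refine le_csSup ⟨2 * C, ?_⟩ ⟨x, hx, y, hy, hxy, rfl⟩
  rintro _ ⟨x', hx', y', hy', -, rfl⟩
  have hx'C := hC x' hx'
  have hy'C := hC y' hy'
  rw [Real.norm_eq_abs] at hx'C hy'C
  linarith [abs_sub (f x') (f y')]

theorem eudist_lineMap_lineMap (u v : Fin m → ℝ) (s t : ℝ) :
    eudist (AffineMap.lineMap u v s) (AffineMap.lineMap u v t) = |s - t| * eudist u v := by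
  have hcoord (l : Fin m) : (AffineMap.lineMap u v s - AffineMap.lineMap u v t) l ^ 2
      = (s - t) ^ 2 * (u l - v l) ^ 2 := by
    simp only [AffineMap.lineMap_apply_module', Pi.sub_apply, Pi.add_apply, Pi.smul_apply,
      smul_eq_mul]
    ring
  simp only [eudist, ← Pi.sub_apply, hcoord, ← mul_sum]
  rw [Real.sqrt_mul (sq_nonneg _), Real.sqrt_sq_eq_abs]

theorem abs_sub_le_one_add_mul_modContM (hf : ContinuousOn f (Set.Icc 0 1))
    {u v : Fin m → ℝ} (hu : u ∈ Set.Icc 0 1) (hv : v ∈ Set.Icc 0 1) {c δ : ℝ}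
    (hc : 0 ≤ c) (hδ : 0 ≤ δ) (huv : eudist u v ≤ c * δ) :
    |f u - f v| ≤ (1 + c) * modContM m f δ := by
  set N := ⌊c⌋₊ + 1
  have hN : (0 : ℝ) < N := by positivity
  have hcN : c ≤ N := by exact_mod_cast (Nat.lt_floor_add_one c).le
  have hN_le : (N : ℝ) ≤ 1 + c := by
    rw [Nat.cast_add_one]
    linarith [Nat.floor_le hc]
  set z : ℕ → Fin m → ℝ := fun i => AffineMap.lineMap u v ((i : ℝ) / N)
  have hz_mem (i : ℕ) (hi : i ≤ N) : z i ∈ Set.Icc 0 1 :=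
    (convex_Icc 0 1).lineMap_mem hu hv
      ⟨by positivity, div_le_one_of_le₀ (Nat.cast_le.2 hi) hN.le⟩
  have hz_step (i : ℕ) : eudist (z i) (z (i + 1)) ≤ δ := by
    have hgap : |(i : ℝ) / N - ((i + 1 : ℕ) : ℝ) / N| = 1 / N := by
      rw [← sub_div, Nat.cast_add_one, sub_add_cancel_left, abs_div, abs_neg, abs_one,
        abs_of_pos hN]
    rw [eudist_lineMap_lineMap, hgap, one_div_mul_eq_div, div_le_iff₀ hN]
    nlinarith
  have htelescope : f u - f v = ∑ i ∈ range N, (f (z i) - f (z (i + 1))) := by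
    rw [sum_range_sub']
    simp [z]
  calc |f u - f v| ≤ ∑ i ∈ range N, |f (z i) - f (z (i + 1))| :=
        htelescope ▸ abs_sum_le_sum_abs _ _
    _ ≤ ∑ _i ∈ range N, modContM m f δ := sum_le_sum fun i hi =>
        abs_sub_le_modContM hf (hz_mem i (mem_range.1 hi).le) (hz_mem (i + 1) (mem_range.1 hi))
          (hz_step i)
    _ = N * modContM m f δ := by rw [sum_const, card_range, nsmul_eq_mul]
    _ ≤ (1 + c) * modContM m f δ := mul_le_mul_of_nonneg_right hN_le (modContM_nonneg f δ)

end ModulusOfContinuity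

section LipschitzComposition

variable {m : ℕ} [Nonempty (Fin m)] {φ : (Fin m → ℝ) → (Fin m → ℝ)} {L : ℝ}

theorem nonneg_of_eudist_le_mul
    (hL : ∀ x ∈ Set.Icc (0 : Fin m → ℝ) 1, ∀ y ∈ Set.Icc (0 : Fin m → ℝ) 1,
      eudist (φ x) (φ y) ≤ L * eudist x y) : 0 ≤ L := by
  have hdist : 0 < eudist (0 : Fin m → ℝ) 1 :=
    Real.sqrt_pos.2 (sum_pos (fun _ _ => by norm_num) univ_nonempty)
  exact nonneg_of_mul_nonneg_left
    ((Real.sqrt_nonneg _).trans (hL 0 ⟨le_rfl, zero_le_one⟩ 1 ⟨zero_le_one, le_rfl⟩)) hdist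

theorem abs_comp_sub_le_modContM {f : (Fin m → ℝ) → ℝ} (hf : ContinuousOn f (Set.Icc 0 1))
    (hφ : Set.MapsTo φ (Set.Icc 0 1) (Set.Icc 0 1))
    (hL : ∀ x ∈ Set.Icc (0 : Fin m → ℝ) 1, ∀ y ∈ Set.Icc (0 : Fin m → ℝ) 1,
      eudist (φ x) (φ y) ≤ L * eudist x y)
    {σ : ℝ} (hσ : 0 < σ) {x y : Fin m → ℝ} (hx : x ∈ Set.Icc 0 1) (hy : y ∈ Set.Icc 0 1) :
    |f (φ x) - f (φ y)| ≤ (1 + eudist x y / σ) * modContM m f (L * σ) := by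
  refine abs_sub_le_one_add_mul_modContM hf (hφ hx) (hφ hy)
    (div_nonneg (Real.sqrt_nonneg _) hσ.le) (mul_nonneg (nonneg_of_eudist_le_mul hL) hσ.le)
    ((hL x hx y hy).trans_eq (by field_simp))

end LipschitzComposition

theorem stmt15 (m : ℕ) (n : Fin m → ℕ) (hn : ∀ l, 1 ≤ n l)
    (φ : (Fin m → ℝ) → (Fin m → ℝ))
    (hφmap : Set.MapsTo φ (Set.Icc (0 : Fin m → ℝ) 1) (Set.Icc (0 : Fin m → ℝ) 1))
    (Lφ : ℝ)
    (hL : ∀ x ∈ Set.Icc (0 : Fin m → ℝ) 1, ∀ y ∈ Set.Icc (0 : Fin m → ℝ) 1,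
      eudist (φ x) (φ y) ≤ Lφ * eudist x y)
    (f : (Fin m → ℝ) → ℝ)
    (hf : ContinuousOn f (Set.Icc (0 : Fin m → ℝ) 1)) :
    (⨆ x : Set.Icc (0 : Fin m → ℝ) 1, |bernOpM m n (f ∘ φ) x - f (φ x)|)
      ≤ (3 / 2) * modContM m f (Lφ * Real.sqrt (∑ l : Fin m, 1 / (n l : ℝ))) := by
  have : Nonempty (Set.Icc (0 : Fin m → ℝ) 1) := ⟨⟨0, le_rfl, zero_le_one⟩⟩
  refine ciSup_le fun ⟨x, hx⟩ => (abs_bernOpM_sub_le (f ∘ φ) hx).trans ?_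
  set σ := √(∑ l : Fin m, 1 / (n l : ℝ))
  set Ω := modContM m f (Lφ * σ)
  have hΩ : 0 ≤ Ω := modContM_nonneg f _
  rcases isEmpty_or_nonempty (Fin m) with hm | hm
  · simp [Subsingleton.elim _ x, hΩ]
  have hσ : 0 < σ :=
    Real.sqrt_pos.2 (sum_pos (fun l _ => by have := hn l; positivity) univ_nonempty)
  calc ∑ k, |(f ∘ φ) (bernNode n k) - (f ∘ φ) x| * bernWeight n k x
      ≤ ∑ k, (1 + eudist (bernNode n k) x / σ) * Ω * bernWeight n k x :=
        sum_le_sum fun k _ => mul_le_mul_of_nonneg_right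
          (abs_comp_sub_le_modContM hf hφmap hL hσ (bernNode_mem_Icc n k) hx)
          (bernWeight_nonneg k hx)
    _ = Ω * (∑ k, bernWeight n k x + (∑ k, eudist (bernNode n k) x * bernWeight n k x) / σ) := by
        rw [sum_div, mul_add, mul_sum, mul_sum, ← sum_add_distrib]
        exact sum_congr rfl fun k _ => by ring
    _ ≤ Ω * (1 + σ / 2 / σ) := by
        rw [sum_bernWeight]
        gcongr
        exact sum_eudist_mul_bernWeight_le (fun l => Nat.one_le_iff_ne_zero.1 (hn l)) hx
    _ = 3 / 2 * Ω := by
        field_simp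
        ring
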